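/- An ℓ-group G is a Martínez ℓ-group if and only if the lattice of principal convex ℓ-subgroups of G (ordered by inclusion, with bottom element {0}) has the Wallman disjunction property. -/

import Mathlib

/-!
Common definitions for lattice-ordered groups (ℓ-groups), written additively.
An ℓ-group is modeled as `[Lattice G] [AddGroup G]` together with the two
`CovariantClass` hypotheses expressing that translation is order-preserving.
-/

/-- The absolute value in an ℓ-group: `|g| = (g ⊔ 0) + ((-g) ⊔ 0)`. -/
def labs {G : Type*} [Lattice G] [AddGroup G] (g : G) : G := (g ⊔ 0) + (-g ⊔ 0)

/-- A convex ℓ-subgroup of `G`: a subgroup which is a sublattice and is convex. -/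
def IsConvexLSubgroup {G : Type*} [Lattice G] [AddGroup G] (H : Set G) : Prop :=
  (0 : G) ∈ H ∧ (∀ a ∈ H, -a ∈ H) ∧ (∀ a ∈ H, ∀ b ∈ H, a + b ∈ H) ∧
  (∀ a ∈ H, ∀ b ∈ H, a ⊔ b ∈ H) ∧ (∀ a ∈ H, ∀ b ∈ H, a ⊓ b ∈ H) ∧
  (∀ a ∈ H, ∀ b ∈ H, ∀ g : G, a ≤ g → g ≤ b → g ∈ H)

/-- The polar `g^⊥ = {h : |h| ⊓ |g| = 0}`. -/
def polar {G : Type*} [Lattice G] [AddGroup G] (g : G) : Set G :=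
  {h : G | labs h ⊓ labs g = 0}

/-- The double polar `g^{⊥⊥} = (g^⊥)^⊥ = {h : ∀ k ∈ g^⊥, |h| ⊓ |k| = 0}`. -/
def biPolar {G : Type*} [Lattice G] [AddGroup G] (g : G) : Set G :=
  {h : G | ∀ k ∈ polar g, labs h ⊓ labs k = 0}

/-- A d-subgroup: a convex ℓ-subgroup containing the double polar of each of its elements. -/
def IsDSubgroup {G : Type*} [Lattice G] [AddGroup G] (H : Set G) : Prop :=
  IsConvexLSubgroup H ∧ ∀ h ∈ H, biPolar h ⊆ H

/-- A Martínez ℓ-group: every convex ℓ-subgroup is a d-subgroup. -/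
def Martinez (G : Type*) [Lattice G] [AddGroup G] : Prop :=
  ∀ H : Set G, IsConvexLSubgroup H → IsDSubgroup H

/-- `G(g)`, the smallest convex ℓ-subgroup of `G` containing `g`. -/
def principalCLS {G : Type*} [Lattice G] [AddGroup G] (g : G) : Set G :=
  {x : G | ∀ H : Set G, IsConvexLSubgroup H → g ∈ H → x ∈ H}


section Helpers
variable {G : Type*} [Lattice G] [AddGroup G]
    [CovariantClass G G (· + ·) (· ≤ ·)]
    [CovariantClass G G (Function.swap (· + ·)) (· ≤ ·)]

theorem my_add_inf (c a b : G) : c + (a ⊓ b) = (c + a) ⊓ (c + b) := by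
  apply le_antisymm
  · exact le_inf (add_le_add_right inf_le_left c) (add_le_add_right inf_le_right c)
  · have h : -c + ((c + a) ⊓ (c + b)) ≤ a ⊓ b := by
      refine le_inf ?_ ?_
      · have := add_le_add_left (inf_le_left (a := c + a) (b := c + b)) (-c)
        simpa using this
      · have := add_le_add_left (inf_le_right (a := c + a) (b := c + b)) (-c)
        simpa using this
    have := add_le_add_right h c
    simpa using this

theorem my_inf_add (c a b : G) : (a ⊓ b) + c = (a + c) ⊓ (b + c) := by
  apply le_antisymm
  · exact le_inf (add_le_add_left inf_le_left c) (add_le_add_left inf_le_right c)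
  · have h : ((a + c) ⊓ (b + c)) + -c ≤ a ⊓ b := by
      refine le_inf ?_ ?_
      · have := add_le_add_right (inf_le_left (a := a + c) (b := b + c)) (-c)
        simpa using this
      · have := add_le_add_right (inf_le_right (a := a + c) (b := b + c)) (-c)
        simpa using this
    have := add_le_add_left h c
    simpa using this

theorem my_neg_le_neg {a b : G} (h : a ≤ b) : -b ≤ -a := by
  have h1 := add_le_add_left h (-b)
  have h2 := add_le_add_right h1 (-a)
  simpa using h2

theorem my_neg_inf (a b : G) : -(a ⊓ b) = -a ⊔ -b := by
  apply le_antisymm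
  · have h : -(-a ⊔ -b) ≤ a ⊓ b := by
      refine le_inf ?_ ?_
      · simpa using my_neg_le_neg (le_sup_left (a := -a) (b := -b))
      · simpa using my_neg_le_neg (le_sup_right (a := -a) (b := -b))
    simpa using my_neg_le_neg h
  · exact sup_le (my_neg_le_neg inf_le_left) (my_neg_le_neg inf_le_right)

theorem labs_eq_abs (g : G) : labs g = |g| := posPart_add_negPart g

theorem labs_nonneg (g : G) : 0 ≤ labs g := by rw [labs_eq_abs]; exact abs_nonneg g

theorem le_labs (g : G) : g ≤ labs g := by rw [labs_eq_abs]; exact le_abs_self g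

theorem neg_le_labs (g : G) : -g ≤ labs g := by rw [labs_eq_abs]; exact neg_le_abs g

theorem labs_of_nonneg {g : G} (h : 0 ≤ g) : labs g = g := by
  rw [labs_eq_abs]; exact abs_of_nonneg h

theorem labs_eq_zero {g : G} (h : labs g = 0) : g = 0 := by
  have h1 := le_labs g; have h2 := neg_le_labs g
  rw [h] at h1 h2
  exact le_antisymm h1 (by simpa using my_neg_le_neg h2)

theorem labs_zero : labs (0 : G) = 0 := labs_of_nonneg le_rfl

theorem labs_le_of {z c : G} (h1 : z ≤ c) (h2 : -z ≤ c) (hc : 0 ≤ c) :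
    labs z ≤ c + c :=
  add_le_add (sup_le h1 hc) (sup_le h2 hc)

theorem my_nsmul_mono {L : G} (hL : 0 ≤ L) {n m : ℕ} (h : n ≤ m) : n • L ≤ m • L := by
  obtain ⟨k, rfl⟩ := Nat.exists_eq_add_of_le h
  rw [add_nsmul]
  exact le_add_of_nonneg_right (nsmul_nonneg hL k)

/-- Riesz-type inequality. -/
theorem inf_add_le' (a b c : G) (ha : 0 ≤ a) (hb : 0 ≤ b) (hc : 0 ≤ c) :
    a ⊓ (b + c) ≤ (a ⊓ b) + (a ⊓ c) := by
  have key : (a ⊓ b) + (a ⊓ c) = ((a + a) ⊓ (a + c)) ⊓ ((b + a) ⊓ (b + c)) := by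
    rw [my_inf_add, my_add_inf, my_add_inf]
  rw [key]
  have s1 : a ⊓ (b + c) ≤ a := inf_le_left
  refine le_inf (le_inf ?_ ?_) (le_inf ?_ inf_le_right)
  · exact s1.trans (le_add_of_nonneg_right ha)
  · exact s1.trans (le_add_of_nonneg_right hc)
  · exact s1.trans (le_add_of_nonneg_left hb)

theorem inf_nsmul_le (a b : G) (ha : 0 ≤ a) (hb : 0 ≤ b) (n : ℕ) :
    a ⊓ (n • b) ≤ n • (a ⊓ b) := by
  induction n with
  | zero => simpa using inf_le_right
  | succ n ih =>
    rw [succ_nsmul, succ_nsmul]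
    calc a ⊓ (n • b + b) ≤ (a ⊓ (n • b)) + (a ⊓ b) :=
          inf_add_le' a (n • b) b ha (nsmul_nonneg hb n) hb
      _ ≤ n • (a ⊓ b) + (a ⊓ b) := add_le_add_left ih _

theorem disjoint_nsmul' {a b : G} (ha : 0 ≤ a) (hb : 0 ≤ b) (h : a ⊓ b = 0) (n : ℕ) :
    a ⊓ (n • b) = 0 := by
  have h1 := inf_nsmul_le a b ha hb n
  rw [h, smul_zero] at h1
  exact le_antisymm h1 (le_inf ha (nsmul_nonneg hb n))

theorem disjoint_nsmul_nsmul {a b : G} (ha : 0 ≤ a) (hb : 0 ≤ b) (h : a ⊓ b = 0)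
    (n m : ℕ) : (n • a) ⊓ (m • b) = 0 := by
  have h1 : a ⊓ (m • b) = 0 := disjoint_nsmul' ha hb h m
  rw [inf_comm] at h1 ⊢
  exact disjoint_nsmul' (nsmul_nonneg hb m) ha h1 n

theorem self_mem_principalCLS (g : G) : g ∈ principalCLS g :=
  fun _ _ hg => hg

theorem zero_mem_principalCLS (g : G) : (0 : G) ∈ principalCLS g :=
  fun _ hH _ => hH.1

theorem principalCLS_subset {g : G} {H : Set G} (hH : IsConvexLSubgroup H)
    (hg : g ∈ H) : principalCLS g ⊆ H :=
  fun _ hx => hx H hH hg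

theorem isConvexLSubgroup_principalCLS (g : G) : IsConvexLSubgroup (principalCLS g) := by
  refine ⟨zero_mem_principalCLS g, ?_, ?_, ?_, ?_, ?_⟩
  · intro a ha H hH hg; exact hH.2.1 a (ha H hH hg)
  · intro a ha b hb H hH hg; exact hH.2.2.1 a (ha H hH hg) b (hb H hH hg)
  · intro a ha b hb H hH hg; exact hH.2.2.2.1 a (ha H hH hg) b (hb H hH hg)
  · intro a ha b hb H hH hg; exact hH.2.2.2.2.1 a (ha H hH hg) b (hb H hH hg)
  · intro a ha b hb x h1 h2 H hH hg
    exact hH.2.2.2.2.2 a (ha H hH hg) b (hb H hH hg) x h1 h2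

theorem labs_mem {H : Set G} (hH : IsConvexLSubgroup H) {g : G} (hg : g ∈ H) :
    labs g ∈ H := by
  obtain ⟨h0, hneg, hadd, hsup, hinf, hconv⟩ := hH
  exact hadd _ (hsup g hg 0 h0) _ (hsup (-g) (hneg g hg) 0 h0)

theorem my_nsmul_mem {H : Set G} (hH : IsConvexLSubgroup H) {g : G} (hg : g ∈ H) (n : ℕ) :
    n • g ∈ H := by
  induction n with
  | zero => simpa using hH.1
  | succ n ih => rw [succ_nsmul]; exact hH.2.2.1 _ ih _ hg

/-- The explicit description of `G(g)`. -/
theorem principalCLS_eq (g : G) :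
    principalCLS g = {y : G | ∃ n : ℕ, labs y ≤ n • labs g} := by
  set L := labs g with hL
  have hL0 : 0 ≤ L := labs_nonneg g
  apply Set.Subset.antisymm
  · intro x hx
    apply hx
    · -- the set is a convex ℓ-subgroup
      refine ⟨⟨0, by simpa using labs_zero.le⟩, ?_, ?_, ?_, ?_, ?_⟩
      · rintro a ⟨n, hn⟩
        refine ⟨2 * n, ?_⟩
        have h1 : -a ≤ n • L := (neg_le_labs a).trans hn
        have h2 : a ≤ n • L := (le_labs a).trans hn
        have := labs_le_of (z := -a) (by simpa using h1) (by simpa using h2)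
          ((labs_nonneg a).trans hn)
        rw [← add_nsmul] at this
        simpa [two_mul] using this
      · rintro a ⟨n, hn⟩ b ⟨m, hm⟩
        refine ⟨2 * (n + m), ?_⟩
        have hub : a + b ≤ (n + m) • L := by
          rw [add_nsmul]
          exact add_le_add ((le_labs a).trans hn) ((le_labs b).trans hm)
        have hlb : -(a + b) ≤ (n + m) • L := by
          rw [neg_add_rev]
          calc -b + -a ≤ m • L + n • L :=
                add_le_add ((neg_le_labs b).trans hm) ((neg_le_labs a).trans hn)
            _ = (m + n) • L := (add_nsmul L m n).symm
            _ = (n + m) • L := by rw [Nat.add_comm]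
        have := labs_le_of hub hlb (nsmul_nonneg hL0 _)
        rw [← add_nsmul] at this
        simpa [two_mul] using this
      · rintro a ⟨n, hn⟩ b ⟨m, hm⟩
        refine ⟨2 * (n + m), ?_⟩
        have hna : labs a ≤ (n + m) • L := hn.trans (my_nsmul_mono hL0 (Nat.le_add_right n m))
        have hmb : labs b ≤ (n + m) • L := hm.trans (my_nsmul_mono hL0 (Nat.le_add_left m n))
        have hub : a ⊔ b ≤ (n + m) • L :=
          sup_le ((le_labs a).trans hna) ((le_labs b).trans hmb)
        have hlb : -(a ⊔ b) ≤ (n + m) • L := by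
          have : -(a ⊔ b) ≤ -a := by simpa using my_neg_le_neg (le_sup_left (a := a) (b := b))
          exact this.trans ((neg_le_labs a).trans hna)
        have := labs_le_of hub hlb (nsmul_nonneg hL0 _)
        rw [← add_nsmul] at this
        simpa [two_mul] using this
      · rintro a ⟨n, hn⟩ b ⟨m, hm⟩
        refine ⟨2 * (n + m), ?_⟩
        have hna : labs a ≤ (n + m) • L := hn.trans (my_nsmul_mono hL0 (Nat.le_add_right n m))
        have hub : a ⊓ b ≤ (n + m) • L := inf_le_left.trans ((le_labs a).trans hna)
        have hmb : labs b ≤ (n + m) • L := hm.trans (my_nsmul_mono hL0 (Nat.le_add_left m n))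
        have hlb : -(a ⊓ b) ≤ (n + m) • L := by
          rw [my_neg_inf]
          exact sup_le ((neg_le_labs a).trans hna) ((neg_le_labs b).trans hmb)
        have := labs_le_of hub hlb (nsmul_nonneg hL0 _)
        rw [← add_nsmul] at this
        simpa [two_mul] using this
      · rintro a ⟨n, hn⟩ b ⟨m, hm⟩ x h1 h2
        refine ⟨2 * (n + m), ?_⟩
        have hna : labs a ≤ (n + m) • L := hn.trans (my_nsmul_mono hL0 (Nat.le_add_right n m))
        have hmb : labs b ≤ (n + m) • L := hm.trans (my_nsmul_mono hL0 (Nat.le_add_left m n))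
        have hub : x ≤ (n + m) • L := h2.trans ((le_labs b).trans hmb)
        have hlb : -x ≤ (n + m) • L :=
          (my_neg_le_neg h1).trans ((neg_le_labs a).trans hna)
        have := labs_le_of hub hlb (nsmul_nonneg hL0 _)
        rw [← add_nsmul] at this
        simpa [two_mul] using this
    · exact ⟨1, by simpa using le_rfl⟩
  · rintro y ⟨n, hn⟩ H hH hg
    have hLmem : L ∈ H := labs_mem hH hg
    have hn' : n • L ∈ H := my_nsmul_mem hH hLmem n
    have hneg : -(n • L) ∈ H := hH.2.1 _ hn'
    refine hH.2.2.2.2.2 _ hneg _ hn' y ?_ ((le_labs y).trans hn)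
    have : -y ≤ n • L := (neg_le_labs y).trans hn
    simpa using my_neg_le_neg this
end Helpers

/-- `G` is Martínez iff the lattice of principal convex
ℓ-subgroups (ordered by inclusion, bottom `{0} = G(0)`, meet = intersection)
has the Wallman disjunction property. -/
theorem stmt_2 {G : Type*} [Lattice G] [AddGroup G]
    [CovariantClass G G (· + ·) (· ≤ ·)]
    [CovariantClass G G (Function.swap (· + ·)) (· ≤ ·)] :
    Martinez G ↔
      ∀ a b : G, principalCLS a ⊂ principalCLS b →
        ∃ c : G, principalCLS a ∩ principalCLS c = {(0 : G)} ∧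
          {(0 : G)} ⊂ principalCLS b ∩ principalCLS c := by
  constructor
  · -- Martinez ⇒ Wallman
    intro hM a b hab
    have hda := hM (principalCLS a) (isConvexLSubgroup_principalCLS a)
    have hbna : b ∉ principalCLS a := by
      intro hb
      exact hab.2 (principalCLS_subset (isConvexLSubgroup_principalCLS a) hb)
    have hbnb : b ∉ biPolar a := fun h => hbna (hda.2 a (self_mem_principalCLS a) h)
    simp only [biPolar, Set.mem_setOf_eq, not_forall] at hbnb
    obtain ⟨k, hk, hne⟩ := hbnb
    refine ⟨labs b ⊓ labs k, ?_, ?_⟩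
    · -- G(a) ∩ G(c) = {0}
      have hc0 : (0 : G) ≤ labs b ⊓ labs k := le_inf (labs_nonneg b) (labs_nonneg k)
      apply Set.Subset.antisymm
      · rintro y ⟨hy1, hy2⟩
        rw [principalCLS_eq] at hy1 hy2
        obtain ⟨n, hn⟩ := hy1
        obtain ⟨m, hm⟩ := hy2
        rw [labs_of_nonneg hc0] at hm
        have hdisj : labs a ⊓ (labs b ⊓ labs k) = 0 := by
          have hle : labs a ⊓ (labs b ⊓ labs k) ≤ labs k ⊓ labs a :=
            le_inf (inf_le_right.trans inf_le_right) inf_le_left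
          exact le_antisymm (hle.trans hk.le) (le_inf (labs_nonneg a) hc0)
        have hz : (n • labs a) ⊓ (m • (labs b ⊓ labs k)) = 0 :=
          disjoint_nsmul_nsmul (labs_nonneg a) hc0 hdisj n m
        have hy0 : labs y ≤ 0 := by
          rw [← hz]; exact le_inf hn hm
        have : labs y = 0 := le_antisymm hy0 (labs_nonneg y)
        simpa using labs_eq_zero this
      · intro y hy
        rw [Set.mem_singleton_iff] at hy
        subst hy
        exact ⟨zero_mem_principalCLS a, zero_mem_principalCLS _⟩
    · -- {0} ⊂ G(b) ∩ G(c)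
      constructor
      · intro y hy
        rw [Set.mem_singleton_iff] at hy
        subst hy
        exact ⟨zero_mem_principalCLS b, zero_mem_principalCLS _⟩
      · intro hsub
        apply hne
        have hc0 : (0 : G) ≤ labs b ⊓ labs k := le_inf (labs_nonneg b) (labs_nonneg k)
        have hcb : labs b ⊓ labs k ∈ principalCLS b := by
          rw [principalCLS_eq]
          exact ⟨1, by rw [labs_of_nonneg hc0]; simpa using inf_le_left⟩
        have := hsub ⟨hcb, self_mem_principalCLS _⟩
        simpa using this
  · -- Wallman ⇒ Martinez
    intro hW H hH
    refine ⟨hH, ?_⟩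
    intro h hh x hx
    set a := labs x ⊓ labs h with ha
    have ha0 : (0 : G) ≤ a := le_inf (labs_nonneg x) (labs_nonneg h)
    have key : x ∈ principalCLS a := by
      by_contra hxa
      have hsub : principalCLS a ⊂ principalCLS x := by
        constructor
        · apply principalCLS_subset (isConvexLSubgroup_principalCLS x)
          rw [principalCLS_eq]
          exact ⟨1, by rw [labs_of_nonneg ha0, ha, one_nsmul]; exact inf_le_left⟩
        · exact fun hsup => hxa (hsup (self_mem_principalCLS x))
      obtain ⟨c, h1, h2⟩ := hW a x hsub
      obtain ⟨e, he, hene⟩ := Set.not_subset.mp h2.2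
      obtain ⟨hex, hec⟩ := he
      rw [principalCLS_eq] at hex hec
      obtain ⟨n, hn⟩ := hex
      obtain ⟨m, hm⟩ := hec
      have hd0 : (0 : G) ≤ labs e ⊓ labs h := le_inf (labs_nonneg e) (labs_nonneg h)
      have hd_in : labs e ⊓ labs h ∈ principalCLS a ∩ principalCLS c := by
        constructor
        · rw [principalCLS_eq]
          refine ⟨n, ?_⟩
          rw [labs_of_nonneg hd0, labs_of_nonneg ha0]
          calc labs e ⊓ labs h ≤ (n • labs x) ⊓ labs h := inf_le_inf_right _ hn
            _ = labs h ⊓ (n • labs x) := inf_comm _ _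
            _ ≤ n • (labs h ⊓ labs x) :=
                inf_nsmul_le _ _ (labs_nonneg h) (labs_nonneg x) n
            _ = n • a := by rw [ha, inf_comm]
        · rw [principalCLS_eq]
          exact ⟨m, by rw [labs_of_nonneg hd0]; exact inf_le_left.trans hm⟩
      rw [h1, Set.mem_singleton_iff] at hd_in
      have hep : e ∈ polar h := hd_in
      have hxe : labs x ⊓ labs e = 0 := hx e hep
      have : labs e ⊓ (n • labs x) = 0 := by
        rw [inf_comm] at hxe
        exact disjoint_nsmul' (labs_nonneg e) (labs_nonneg x) hxe n
      have he0 : labs e = 0 := le_antisymm (by rw [← this]; exact le_inf le_rfl hn)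
        (labs_nonneg e)
      exact hene (by simpa using labs_eq_zero he0)
    have haH : a ∈ H :=
      hH.2.2.2.2.2 0 hH.1 (labs h) (labs_mem hH hh) a ha0 inf_le_right
    exact key H hH haH
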